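/- Let p > 2, c_p = (2(p+1))^{1/(p-1)}, and Q(x) = c_p (2cosh((p-1)x/2))^{-2/(p-1)}. Then there is C > 0 such that for all z ≥ 1, |∫_{-z/2}^{∞} (d/dy)(Q^p(y)) Q(y+z) dy - 2 c_p² e^{-z}| ≤ C(e^{-(p+1)z/2} + z e^{-pz} + e^{-2z}). -/

import Mathlib

open MeasureTheory

/-- The soliton interaction constant `c_p = (2(p+1))^{1/(p-1)}`. -/
noncomputable def cp (p : ℝ) : ℝ := (2 * (p + 1)) ^ ((1 : ℝ) / (p - 1))

/-- The explicit soliton profile `Q(x) = c_p (2 cosh((p-1)x/2))^{-2/(p-1)}`. -/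
noncomputable def Q (p : ℝ) (x : ℝ) : ℝ :=
  cp p * (2 * Real.cosh ((p - 1) * x / 2)) ^ (-(2 / (p - 1)))

/-!
Write `Q(y + z) = c_p e^{-(y+z)} + O(e^{-p(y+z)})`. Against the leading part, integration by
parts turns `∫_{-z/2}^∞ (Q^p)' e^{-y}` into `∫_{-z/2}^∞ Q^p e^{-y} - Q^p(-z/2) e^{z/2}`, and
`Q^p e^{-y}` has the explicit primitive `-2 c_p (1 + e^{(p-1)y})^{-(p+1)/(p-1)}` (this is where
`c_p^{p-1} = 2(p+1)` enters). Hence the integral is `2 c_p + O(e^{-(p-1)z/2})`, which gives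
`2 c_p² e^{-z} + O(e^{-(p+1)z/2})`. Since `|(Q^p)'| ≤ p Q^p ≤ p c_p^p e^{-p|y|}`, the remainder
contributes `O((1 + z) e^{-pz})`.
-/

open Real Set Filter

lemma abs_one_add_rpow_neg_sub_one_le {b t : ℝ} (hb : 0 ≤ b) (ht : 0 ≤ t) :
    |(1 + t) ^ (-b) - 1| ≤ b * t := by
  have hpos : 0 < 1 + t := by linarith
  have hle : (1 + t) ^ (-b) ≤ 1 := rpow_le_one_of_one_le_of_nonpos (by linarith) (by linarith)
  have hlog : log (1 + t) ≤ t := by linarith [log_le_sub_one_of_pos hpos]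
  have hge : 1 - b * t ≤ (1 + t) ^ (-b) := by
    rw [rpow_def_of_pos hpos]
    nlinarith [add_one_le_exp (log (1 + t) * -b), mul_le_mul_of_nonneg_left hlog hb]
  rw [abs_of_nonpos (by linarith)]
  linarith

lemma two_mul_cosh_eq_exp_mul (t : ℝ) : 2 * cosh t = exp t * (1 + exp (-(2 * t))) := by
  rw [cosh_eq, mul_add, mul_one, ← exp_add]
  ring_nf

lemma two_mul_cosh_eq_exp_neg_mul (t : ℝ) : 2 * cosh t = exp (-t) * (1 + exp (2 * t)) := by
  rw [cosh_eq, mul_add, mul_one, ← exp_add]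
  ring_nf

lemma abs_sinh_div_cosh_le_one (t : ℝ) : |sinh t / cosh t| ≤ 1 := by
  rw [abs_div, abs_of_pos (cosh_pos t), div_le_one (cosh_pos t), abs_sinh, ← cosh_abs]
  exact (sinh_lt_cosh _).le

lemma exp_abs_le_two_mul_cosh (t : ℝ) : exp |t| ≤ 2 * cosh t := by
  rw [cosh_eq]; linarith [exp_abs_le t]

lemma abs_setIntegral_Ioi_le_of_abs_le_exp_neg_max {f : ℝ → ℝ} {a M : ℝ} (ha : a ≤ 0)
    (hf : IntegrableOn f (Ioi a)) (hM : ∀ y, |f y| ≤ M * exp (-max y 0)) :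
    |∫ y in Ioi a, f y| ≤ M * (1 - a) := by
  rw [← Ioc_union_Ioi_eq_Ioi ha, setIntegral_union (Ioc_disjoint_Ioi le_rfl) measurableSet_Ioi
    (hf.mono_set Ioc_subset_Ioi_self) (hf.mono_set (Ioi_subset_Ioi ha))]
  have hnear : ‖∫ y in Ioc a 0, f y‖ ≤ M * -a := by
    have h := norm_setIntegral_le_of_norm_le_const (μ := volume) (s := Ioc a 0) (C := M) (f := f)
      measure_Ioc_lt_top fun y hy => by
        simpa only [Real.norm_eq_abs, max_eq_right hy.2, neg_zero, exp_zero, mul_one] using hM y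
    rwa [Real.volume_real_Ioc_of_le ha, zero_sub] at h
  have hfar : ‖∫ y in Ioi 0, f y‖ ≤ M := by
    calc ‖∫ y in Ioi 0, f y‖ ≤ ∫ y in Ioi 0, M * exp (-y) := by
          refine norm_integral_le_of_norm_le
            (by simpa using (exp_neg_integrableOn_Ioi 0 one_pos).const_mul M) ?_
          refine (ae_restrict_iff' measurableSet_Ioi).mpr (ae_of_all _ fun y hy => ?_)
          simpa only [Real.norm_eq_abs, max_eq_left (mem_Ioi.mp hy).le] using hM y
      _ = M := by rw [integral_const_mul, integral_exp_neg_Ioi_zero, mul_one]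
  calc _ ≤ ‖∫ y in Ioc a 0, f y‖ + ‖∫ y in Ioi 0, f y‖ := abs_add_le _ _
    _ ≤ M * -a + M := add_le_add hnear hfar
    _ = M * (1 - a) := by ring

section
variable {p : ℝ}

lemma cp_pos (hp : -1 < p) : 0 < cp p := rpow_pos_of_pos (by linarith) _

lemma cp_rpow (hp : 1 < p) : cp p ^ p = 2 * (p + 1) * cp p := by
  have hpow : cp p ^ (p - 1) = 2 * (p + 1) := by
    rw [cp, ← rpow_mul (by linarith), one_div_mul_cancel (by linarith), rpow_one]
  calc cp p ^ p = cp p ^ (p - 1) * cp p ^ (1 : ℝ) := by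
        rw [← rpow_add (cp_pos (by linarith))]; ring_nf
    _ = 2 * (p + 1) * cp p := by rw [hpow, rpow_one]

lemma Q_pos (hp : -1 < p) (y : ℝ) : 0 < Q p y :=
  mul_pos (cp_pos hp) (rpow_pos_of_pos (by positivity) _)

lemma Q_le (hp : 1 < p) (y : ℝ) : Q p y ≤ cp p * exp (-|y|) := by
  have hp1 : 0 < p - 1 := by linarith
  have hcosh : exp ((p - 1) / 2 * |y|) ≤ 2 * cosh ((p - 1) * y / 2) := by
    convert exp_abs_le_two_mul_cosh ((p - 1) * y / 2) using 2
    rw [abs_div, abs_mul, abs_of_pos hp1, abs_two]; ring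
  calc Q p y ≤ cp p * exp ((p - 1) / 2 * |y|) ^ (-(2 / (p - 1))) := by
        refine mul_le_mul_of_nonneg_left ?_ (cp_pos (by linarith)).le
        exact rpow_le_rpow_of_nonpos (exp_pos _) hcosh (neg_nonpos.mpr (by positivity))
    _ = cp p * exp (-|y|) := by
        rw [← exp_mul]; congr 2; field_simp

lemma Q_rpow_eq (hp : -1 < p) (y : ℝ) :
    Q p y ^ p = cp p ^ p * (2 * cosh ((p - 1) * y / 2)) ^ (-(2 * p / (p - 1))) := by
  rw [Q, mul_rpow (cp_pos hp).le (rpow_nonneg (by positivity) _), ← rpow_mul (by positivity)]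
  ring_nf

lemma Q_rpow_le (hp : 1 < p) (y : ℝ) : Q p y ^ p ≤ cp p ^ p * exp (-p * |y|) := by
  calc Q p y ^ p ≤ (cp p * exp (-|y|)) ^ p :=
        rpow_le_rpow (Q_pos (by linarith) y).le (Q_le hp y) (by linarith)
    _ = cp p ^ p * exp (-p * |y|) := by
        rw [mul_rpow (cp_pos (by linarith)).le (exp_pos _).le, ← exp_mul]
        ring_nf

lemma Q_eq_mul_one_add_rpow (hp : 1 < p) (y : ℝ) :
    Q p y = cp p * exp (-y) * (1 + exp (-((p - 1) * y))) ^ (-(2 / (p - 1))) := by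
  have hp1 : p - 1 ≠ 0 := by linarith
  rw [Q, two_mul_cosh_eq_exp_mul, mul_rpow (exp_pos _).le (by positivity), ← exp_mul]
  field_simp

lemma abs_Q_sub_le (hp : 1 < p) (y : ℝ) :
    |Q p y - cp p * exp (-y)| ≤ cp p * (2 / (p - 1)) * exp (-(p * y)) := by
  have hc : 0 < cp p * exp (-y) := mul_pos (cp_pos (by linarith)) (exp_pos _)
  calc |Q p y - cp p * exp (-y)|
      = cp p * exp (-y) * |(1 + exp (-((p - 1) * y))) ^ (-(2 / (p - 1))) - 1| := by
        rw [Q_eq_mul_one_add_rpow hp, ← mul_sub_one, abs_mul, abs_of_pos hc]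
    _ ≤ cp p * exp (-y) * (2 / (p - 1) * exp (-((p - 1) * y))) := by
        gcongr
        exact abs_one_add_rpow_neg_sub_one_le (div_nonneg zero_le_two (by linarith)) (exp_pos _).le
    _ = cp p * (2 / (p - 1)) * exp (-(p * y)) := by
        rw [mul_mul_mul_comm, ← exp_add]; ring_nf

lemma hasDerivAt_Q_rpow (hp : 1 < p) (y : ℝ) :
    HasDerivAt (fun y => Q p y ^ p)
      (-p * (sinh ((p - 1) * y / 2) / cosh ((p - 1) * y / 2)) * Q p y ^ p) y := by
  have hp1 : p - 1 ≠ 0 := by linarith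
  have hcosh : HasDerivAt (fun x => 2 * cosh ((p - 1) * x / 2))
      (2 * (sinh ((p - 1) * y / 2) * ((p - 1) / 2))) y := by
    have h := ((hasDerivAt_id y).const_mul (p - 1)).div_const 2
    simp only [id, mul_one] at h
    exact h.cosh.const_mul 2
  have h := (hcosh.rpow_const (p := -(2 * p / (p - 1))) (Or.inl (by positivity))).const_mul
    (cp p ^ p)
  simp only [← Q_rpow_eq (show -1 < p by linarith)] at h
  refine h.congr_deriv ?_
  rw [Q_rpow_eq (by linarith), rpow_sub (by positivity), rpow_one]
  field_simp

lemma abs_deriv_Q_rpow_le (hp : 1 < p) (y : ℝ) :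
    |deriv (fun y => Q p y ^ p) y| ≤ p * cp p ^ p * exp (-p * |y|) := by
  rw [(hasDerivAt_Q_rpow hp y).deriv, abs_mul, abs_mul, abs_neg, abs_of_pos (by linarith : 0 < p),
    abs_of_pos (rpow_pos_of_pos (Q_pos (by linarith) y) p), mul_assoc]
  calc p * (|sinh ((p - 1) * y / 2) / cosh ((p - 1) * y / 2)| * Q p y ^ p)
      ≤ p * (1 * (cp p ^ p * exp (-p * |y|))) := by
        gcongr p * ?_
        exact mul_le_mul (abs_sinh_div_cosh_le_one _) (Q_rpow_le hp y)
          (rpow_pos_of_pos (Q_pos (by linarith) y) p).le zero_le_one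
    _ = p * cp p ^ p * exp (-p * |y|) := by ring

lemma Q_rpow_mul_exp_neg_eq (hp : 1 < p) (y : ℝ) :
    Q p y ^ p * exp (-y) =
      cp p ^ p * (exp ((p - 1) * y) * (1 + exp ((p - 1) * y)) ^ (-(2 * p / (p - 1)))) := by
  have hp1 : p - 1 ≠ 0 := by linarith
  rw [Q_rpow_eq (by linarith), two_mul_cosh_eq_exp_neg_mul,
    mul_rpow (exp_pos _).le (by positivity), ← exp_mul]
  field_simp
  rw [mul_assoc, ← exp_add]
  ring_nf

lemma hasDerivAt_one_add_exp_rpow (hp : 1 < p) (y : ℝ) :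
    HasDerivAt (fun y => -(2 * cp p) * (1 + exp ((p - 1) * y)) ^ (-((p + 1) / (p - 1))))
      (Q p y ^ p * exp (-y)) y := by
  have hp1 : p - 1 ≠ 0 := by linarith
  have h1 : HasDerivAt (fun y => 1 + exp ((p - 1) * y)) (exp ((p - 1) * y) * (p - 1)) y := by
    simpa using (((hasDerivAt_id y).const_mul (p - 1)).exp).const_add 1
  refine ((h1.rpow_const (Or.inl (by positivity))).const_mul _).congr_deriv ?_
  rw [Q_rpow_mul_exp_neg_eq hp, cp_rpow hp,
    show -((p + 1) / (p - 1)) - 1 = -(2 * p / (p - 1)) by field_simp; ring]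
  field_simp

lemma integrableOn_deriv_Q_rpow_mul (hp : 1 < p) {F : ℝ → ℝ} (hF : Measurable F) {K : ℝ}
    (hK : ∀ y, |F y| ≤ K * exp (-y)) (a : ℝ) :
    IntegrableOn (fun y => deriv (fun y => Q p y ^ p) y * F y) (Ioi a) := by
  have hK0 : 0 ≤ K := by simpa using (abs_nonneg _).trans (hK 0)
  refine Integrable.mono' ((exp_neg_integrableOn_Ioi a (by linarith : 0 < p - 1)).const_mul
    (p * cp p ^ p * K)) ((measurable_deriv _).mul hF).aestronglyMeasurable.restrict
    (ae_of_all _ fun y => ?_)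
  have hexp : exp (-p * |y|) * exp (-y) ≤ exp (-(p - 1) * y) := by
    rw [← exp_add, exp_le_exp]
    cases abs_cases y <;> nlinarith
  calc ‖deriv (fun y => Q p y ^ p) y * F y‖
      ≤ (p * cp p ^ p * exp (-p * |y|)) * (K * exp (-y)) := by
        rw [norm_mul]
        exact mul_le_mul (abs_deriv_Q_rpow_le hp y) (hK y) (abs_nonneg _)
          ((abs_nonneg _).trans (abs_deriv_Q_rpow_le hp y))
    _ = (p * cp p ^ p * K) * (exp (-p * |y|) * exp (-y)) := by ring
    _ ≤ (p * cp p ^ p * K) * exp (-(p - 1) * y) := by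
        have := rpow_pos_of_pos (cp_pos (show -1 < p by linarith)) p
        exact mul_le_mul_of_nonneg_left hexp (by positivity)

lemma tendsto_Q_rpow_mul_exp_neg_atTop (hp : 1 < p) :
    Tendsto (fun y => Q p y ^ p * exp (-y)) atTop (nhds 0) := by
  have hcpp := rpow_pos_of_pos (cp_pos (show -1 < p by linarith)) p
  refine squeeze_zero (fun y => (mul_pos (rpow_pos_of_pos (Q_pos (by linarith) y) p)
    (exp_pos _)).le) (fun y => ?_)
    (by simpa using tendsto_exp_neg_atTop_nhds_zero.const_mul (cp p ^ p))
  have hdecay : exp (-p * |y|) ≤ 1 := exp_le_one_iff.mpr (by nlinarith [abs_nonneg y])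
  calc Q p y ^ p * exp (-y) ≤ cp p ^ p * exp (-p * |y|) * exp (-y) := by
        gcongr; exact Q_rpow_le hp y
    _ ≤ cp p ^ p * exp (-y) := by
        gcongr; exact mul_le_of_le_one_right hcpp.le hdecay

lemma integral_deriv_Q_rpow_mul_exp_neg (hp : 1 < p) (a : ℝ) :
    ∫ y in Ioi a, deriv (fun y => Q p y ^ p) y * exp (-y) =
      2 * cp p * (1 + exp ((p - 1) * a)) ^ (-((p + 1) / (p - 1))) - Q p a ^ p * exp (-a) := by
  set G := fun y => Q p y ^ p * exp (-y) +
    -(2 * cp p) * (1 + exp ((p - 1) * y)) ^ (-((p + 1) / (p - 1)))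
  have hG : ∀ y, HasDerivAt G (deriv (fun y => Q p y ^ p) y * exp (-y)) y := fun y => by
    have h := ((hasDerivAt_Q_rpow hp y).mul (hasDerivAt_neg y).exp).add
      (hasDerivAt_one_add_exp_rpow hp y)
    refine h.congr_deriv ?_
    rw [(hasDerivAt_Q_rpow hp y).deriv]
    ring
  have hprim_lim : Tendsto
      (fun y => -(2 * cp p) * (1 + exp ((p - 1) * y)) ^ (-((p + 1) / (p - 1)))) atTop (nhds 0) := by
    have h := (tendsto_rpow_neg_atTop (by positivity : 0 < (p + 1) / (p - 1))).comp
      (tendsto_atTop_add_const_left _ 1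
        (tendsto_exp_atTop.comp (tendsto_id.const_mul_atTop (by linarith : 0 < p - 1))))
    simpa using h.const_mul (-(2 * cp p))
  have h := integral_Ioi_of_hasDerivAt_of_tendsto (hG a).continuousAt.continuousWithinAt
    (fun y _ => hG y) (integrableOn_deriv_Q_rpow_mul hp (by fun_prop) (K := 1) (by simp) a)
    ((tendsto_Q_rpow_mul_exp_neg_atTop hp).add hprim_lim)
  rw [h]
  simp only [G]
  ring

lemma abs_integral_deriv_Q_rpow_mul_exp_neg_sub_le (hp : 1 < p) {a : ℝ} (ha : a ≤ 0) :
    |(∫ y in Ioi a, deriv (fun y => Q p y ^ p) y * exp (-y)) - 2 * cp p| ≤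
      (2 * cp p * ((p + 1) / (p - 1)) + cp p ^ p) * exp ((p - 1) * a) := by
  have hcp := cp_pos (show -1 < p by linarith)
  have hbase : |(1 + exp ((p - 1) * a)) ^ (-((p + 1) / (p - 1))) - 1| ≤
      (p + 1) / (p - 1) * exp ((p - 1) * a) :=
    abs_one_add_rpow_neg_sub_one_le (div_nonneg (by linarith) (by linarith)) (exp_pos _).le
  have hboundary : Q p a ^ p * exp (-a) ≤ cp p ^ p * exp ((p - 1) * a) := by
    calc Q p a ^ p * exp (-a) ≤ cp p ^ p * exp (-p * |a|) * exp (-a) := by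
          gcongr; exact Q_rpow_le hp a
      _ = cp p ^ p * exp ((p - 1) * a) := by
          rw [abs_of_nonpos ha, mul_assoc, ← exp_add]; ring_nf
  have hboundary_nonneg : 0 ≤ Q p a ^ p * exp (-a) :=
    (mul_pos (rpow_pos_of_pos (Q_pos (by linarith) a) p) (exp_pos _)).le
  rw [integral_deriv_Q_rpow_mul_exp_neg hp,
    show ∀ A B : ℝ, 2 * cp p * A - B - 2 * cp p = 2 * cp p * (A - 1) - B by intros; ring]
  calc _ ≤ |2 * cp p * ((1 + exp ((p - 1) * a)) ^ (-((p + 1) / (p - 1))) - 1)| +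
        |Q p a ^ p * exp (-a)| := abs_sub _ _
    _ ≤ 2 * cp p * ((p + 1) / (p - 1) * exp ((p - 1) * a)) + cp p ^ p * exp ((p - 1) * a) := by
        rw [abs_mul, abs_of_pos (by positivity), abs_of_nonneg hboundary_nonneg]
        gcongr
    _ = _ := by ring

lemma integrableOn_deriv_Q_rpow_mul_tail (hp : 1 < p) (a z : ℝ) :
    IntegrableOn
      (fun y => deriv (fun y => Q p y ^ p) y * (Q p (y + z) - cp p * exp (-(y + z)))) (Ioi a) := by
  have hcp := cp_pos (show -1 < p by linarith)
  refine integrableOn_deriv_Q_rpow_mul hp (by unfold Q; fun_prop) (K := 2 * cp p * exp (-z))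
    (fun y => ?_) a
  have hQ : Q p (y + z) ≤ cp p * exp (-(y + z)) :=
    (Q_le hp _).trans
      (mul_le_mul_of_nonneg_left (exp_le_exp.mpr (neg_le_neg (le_abs_self _))) hcp.le)
  have hsplit : cp p * exp (-(y + z)) = cp p * exp (-z) * exp (-y) := by
    rw [mul_assoc, ← exp_add]; ring_nf
  have := Q_pos (show -1 < p by linarith) (y + z)
  have := mul_pos hcp (exp_pos (-(y + z)))
  rw [abs_le]
  constructor <;> linarith

lemma integral_deriv_Q_rpow_mul_Q_add (hp : 1 < p) (a z : ℝ) :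
    ∫ y in Ioi a, deriv (fun y => Q p y ^ p) y * Q p (y + z) =
      cp p * exp (-z) * (∫ y in Ioi a, deriv (fun y => Q p y ^ p) y * exp (-y)) +
        ∫ y in Ioi a, deriv (fun y => Q p y ^ p) y * (Q p (y + z) - cp p * exp (-(y + z))) := by
  have hexp := (integrableOn_deriv_Q_rpow_mul hp (F := fun y => exp (-y)) (by fun_prop) (K := 1)
    (by simp) a).const_mul (cp p * exp (-z))
  rw [← integral_const_mul, ← integral_add hexp (integrableOn_deriv_Q_rpow_mul_tail hp a z)]
  congr 1 with y
  rw [neg_add, exp_add]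
  ring

lemma abs_integral_deriv_Q_rpow_mul_tail_le (hp : 1 < p) {z : ℝ} (hz : 0 ≤ z) :
    |∫ y in Ioi (-z / 2),
        deriv (fun y => Q p y ^ p) y * (Q p (y + z) - cp p * exp (-(y + z)))| ≤
      p * cp p ^ p * (cp p * (2 / (p - 1))) * exp (-p * z) * (1 + z / 2) := by
  have hcp := cp_pos (show -1 < p by linarith)
  have hcpp := rpow_pos_of_pos hcp p
  have hbound : ∀ y, |deriv (fun y => Q p y ^ p) y * (Q p (y + z) - cp p * exp (-(y + z)))| ≤
      p * cp p ^ p * (cp p * (2 / (p - 1))) * exp (-p * z) * exp (-max y 0) := fun y => by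
    have hexp : exp (-p * |y|) * exp (-(p * (y + z))) ≤ exp (-p * z) * exp (-max y 0) := by
      rw [← exp_add, ← exp_add, exp_le_exp]
      rcases le_total y 0 with hy | hy
      · rw [abs_of_nonpos hy, max_eq_right hy]; nlinarith
      · rw [abs_of_nonneg hy, max_eq_left hy]; nlinarith
    calc _ ≤ (p * cp p ^ p * exp (-p * |y|)) * (cp p * (2 / (p - 1)) * exp (-(p * (y + z)))) := by
          rw [abs_mul]
          exact mul_le_mul (abs_deriv_Q_rpow_le hp y) (abs_Q_sub_le hp _) (abs_nonneg _)
            (by positivity)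
      _ = p * cp p ^ p * (cp p * (2 / (p - 1))) * (exp (-p * |y|) * exp (-(p * (y + z)))) := by
          ring
      _ ≤ _ := by
          have : 0 < p - 1 := by linarith
          rw [mul_assoc _ (exp (-p * z))]
          gcongr
  calc _ ≤ p * cp p ^ p * (cp p * (2 / (p - 1))) * exp (-p * z) * (1 - -z / 2) :=
        abs_setIntegral_Ioi_le_of_abs_le_exp_neg_max (by linarith)
          (integrableOn_deriv_Q_rpow_mul_tail hp _ z) hbound
    _ = _ := by ring

lemma abs_integral_deriv_Q_rpow_mul_Q_add_sub_le (hp : 1 < p) {z : ℝ} (hz : 0 ≤ z) :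
    |(∫ y in Ioi (-z / 2), deriv (fun y => Q p y ^ p) y * Q p (y + z)) -
        2 * cp p ^ 2 * exp (-z)| ≤
      cp p * (2 * cp p * ((p + 1) / (p - 1)) + cp p ^ p) * exp (-(p + 1) * z / 2) +
        p * cp p ^ p * (cp p * (2 / (p - 1))) * exp (-p * z) * (1 + z / 2) := by
  have hcp := cp_pos (show -1 < p by linarith)
  have hmain := abs_integral_deriv_Q_rpow_mul_exp_neg_sub_le hp (a := -z / 2) (by linarith)
  have hexp : exp (-(p + 1) * z / 2) = exp (-z) * exp ((p - 1) * (-z / 2)) := by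
    rw [← exp_add]; ring_nf
  rw [integral_deriv_Q_rpow_mul_Q_add hp, hexp,
    show ∀ J T : ℝ, cp p * exp (-z) * J + T - 2 * cp p ^ 2 * exp (-z) =
      cp p * exp (-z) * (J - 2 * cp p) + T by intros; ring]
  refine (abs_add_le _ _).trans (add_le_add ?_ (abs_integral_deriv_Q_rpow_mul_tail_le hp hz))
  rw [abs_mul, abs_of_pos (by positivity)]
  calc _ ≤ cp p * exp (-z) *
        ((2 * cp p * ((p + 1) / (p - 1)) + cp p ^ p) * exp ((p - 1) * (-z / 2))) := by gcongr
    _ = _ := by ring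

end

/-- Leading-order soliton-tail interaction integral:
`|∫_{-z/2}^∞ (Q^p)'(y) Q(y+z) dy - 2c_p² e^{-z}| ≲ e^{-(p+1)z/2} + z e^{-pz} + e^{-2z}`. -/
theorem soliton_tail_interaction (p : ℝ) (hp : 2 < p) :
    ∃ C > 0, ∀ z : ℝ, 1 ≤ z →
      |(∫ y in Set.Ioi (-z / 2), deriv (fun y : ℝ => Q p y ^ p) y * Q p (y + z))
          - 2 * (cp p) ^ 2 * Real.exp (-z)| ≤
        C * (Real.exp (-(p + 1) * z / 2) + z * Real.exp (-p * z) + Real.exp (-2 * z)) := by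
  have hp1 : 1 < p := by linarith
  have hcp := cp_pos (show -1 < p by linarith)
  have hcpp := rpow_pos_of_pos hcp p
  set C₁ := cp p * (2 * cp p * ((p + 1) / (p - 1)) + cp p ^ p)
  set C₂ := 3 / 2 * (p * cp p ^ p * (cp p * (2 / (p - 1))))
  have hC₁ : 0 < C₁ := by positivity
  have hC₂ : 0 < C₂ := by positivity
  refine ⟨C₁ + C₂, by positivity, fun z hz => ?_⟩
  have h₁ := exp_pos (-(p + 1) * z / 2)
  have h₂ : 0 < z * exp (-p * z) := by positivity
  have h₃ := exp_pos (-2 * z)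
  calc _ ≤ C₁ * exp (-(p + 1) * z / 2) + C₂ * (2 / 3 * (1 + z / 2) * exp (-p * z)) := by
        convert abs_integral_deriv_Q_rpow_mul_Q_add_sub_le hp1 (z := z) (by linarith) using 2
        simp only [C₂]; ring
    _ ≤ C₁ * exp (-(p + 1) * z / 2) + C₂ * (z * exp (-p * z)) := by gcongr; linarith
    _ ≤ (C₁ + C₂) * (exp (-(p + 1) * z / 2) + z * exp (-p * z) + exp (-2 * z)) := by nlinarith
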